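/- arXiv:1805.00986 — 2 statements merged into one kernel-verified Lean document; each statement's English description precedes it below -/
import Mathlib

section
/- With a_i = a·q^{λ_i}·ħ^{i-n} as above, define E_1(λ) = a·(1 + (1-ħ)·∑_{i=1}^n (q^{λ_i}-1)·ħ^{i-1}). Then E_1(λ) = a·ħ^n + ħ^{n-1}·(1-ħ)·e_1(a_1,…,a_n). -/
/-!
Split off the `-1` in each summand: the resulting geometric sum telescopes,
`(1 - ℏ) ∑_{i<n} ℏ^i = 1 - ℏ^n`, so `E₁(λ) = a ℏ^n + (1 - ℏ) ∑ aq^{λᵢ} ℏ^i`.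
The factor `ℏ^{n-1}` in front of `e₁` exactly cancels the shift `ℏ^{1-n}` in each `aᵢ`.
-/

open Finset

theorem one_add_one_sub_mul_sum_sub_one_mul_pow {R : Type*} [CommRing R] (x : R) (c : ℕ → R)
    (n : ℕ) :
    1 + (1 - x) * ∑ i ∈ range n, (c i - 1) * x ^ i
      = x ^ n + (1 - x) * ∑ i ∈ range n, c i * x ^ i := by
  have hsplit : ∑ i ∈ range n, (c i - 1) * x ^ i
      = ∑ i ∈ range n, c i * x ^ i - ∑ i ∈ range n, x ^ i := by
    simp only [sub_one_mul, sum_sub_distrib]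
  linear_combination (1 - x) * hsplit - mul_neg_geom_sum x n

theorem zpow_sub_one_mul_sum_mul_zpow_add_one_sub {K : Type*} [Semifield K] {x : K} (hx : x ≠ 0)
    (c : ℕ → K) (n : ℕ) :
    x ^ ((n : ℤ) - 1) * ∑ i ∈ range n, c i * x ^ ((i : ℤ) + 1 - n)
      = ∑ i ∈ range n, c i * x ^ i := by
  rw [mul_sum]
  refine sum_congr rfl fun i _ => ?_
  rw [mul_left_comm, ← zpow_add₀ hx, ← zpow_natCast]
  ring_nf

/-- Proposition (matching spectra): with aᵢ = a·q^{λᵢ}·ℏ^{i-n},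
E₁(λ) = a(1 + (1-ℏ)∑(q^{λᵢ}-1)ℏ^{i-1}) equals a·ℏⁿ + ℏ^{n-1}(1-ℏ)·e₁(a₁,…,aₙ). -/
theorem stmt4 {K : Type*} [Field K] (q ℏ a : K) (hℏ0 : ℏ ≠ 0)
    (n : ℕ) (lam : ℕ → ℕ) :
    a * (1 + (1 - ℏ) * ∑ i ∈ Finset.range n, (q ^ lam i - 1) * ℏ ^ i)
      = a * ℏ ^ (n : ℤ) + ℏ ^ ((n : ℤ) - 1) * (1 - ℏ) *
          ∑ i ∈ Finset.range n, a * q ^ lam i * ℏ ^ ((i : ℤ) + 1 - n) := by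
  have hshift := zpow_sub_one_mul_sum_mul_zpow_add_one_sub hℏ0 (fun i => a * q ^ lam i) n
  rw [one_add_one_sub_mul_sum_sub_one_mul_pow, zpow_natCast, mul_comm _ (1 - ℏ), mul_assoc (1 - ℏ),
    hshift]
  simp only [mul_assoc, ← mul_sum]
  ring
end

section
/- Assume |ħ| < 1. With a_i = a·q^{λ_i}·ħ^{i-n} for i = 1,…,n where λ is a fixed partition padded by zeros (λ_i = 0 for i > ℓ(λ)), the limit as n → ∞ of ħ^{n-1}·(1-ħ)·∑_{i=1}^n a_i exists and equals a·(1 + (1-ħ)·∑_{i=1}^{ℓ(λ)} (q^{λ_i}-1)·ħ^{i-1}). -/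
open Filter

/-!
Multiplying by `ℏ^(n-1)` turns the sum into `∑_{i<n} a q^{λᵢ} ℏ^i`. Writing `q^{λᵢ} = 1 + (q^{λᵢ} - 1)`,
the first part is a geometric sum, so `(1 - ℏ)` times it is `1 - ℏ^n → 1`, while the second part
stops changing once `n ≥ ℓ(λ)`.
-/

theorem zpow_mul_sum_zpow_sub {K : Type*} [Field K] {x : K} (hx : x ≠ 0) (c : ℕ → K) (n : ℕ) :
    x ^ ((n : ℤ) - 1) * ∑ i ∈ Finset.range n, c i * x ^ ((i : ℤ) + 1 - n) =
      ∑ i ∈ Finset.range n, c i * x ^ i := by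
  rw [Finset.mul_sum]
  refine Finset.sum_congr rfl fun i _ => ?_
  rw [mul_left_comm, ← zpow_add₀ hx, ← zpow_natCast]
  congr 2
  ring

theorem one_sub_mul_sum_one_add_mul_pow {R : Type*} [CommRing R] (x : R) {g : ℕ → R} {L n : ℕ}
    (hg : ∀ i, L ≤ i → g i = 0) (hn : L ≤ n) :
    (1 - x) * ∑ i ∈ Finset.range n, (1 + g i) * x ^ i =
      1 - x ^ n + (1 - x) * ∑ i ∈ Finset.range L, g i * x ^ i := by
  have htail : ∑ i ∈ Finset.range n, g i * x ^ i = ∑ i ∈ Finset.range L, g i * x ^ i :=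
    (Finset.sum_subset (Finset.range_subset_range.mpr hn) fun i _ hi => by
      simp [hg i (by simpa using hi)]).symm
  simp only [add_mul, one_mul, Finset.sum_add_distrib, htail]
  linear_combination -geom_sum_mul x n

theorem tendsto_one_sub_mul_sum_one_add_mul_pow {K : Type*} [NormedField K] {x : K}
    (hx : ‖x‖ < 1) {g : ℕ → K} {L : ℕ} (hg : ∀ i, L ≤ i → g i = 0) :
    Tendsto (fun n => (1 - x) * ∑ i ∈ Finset.range n, (1 + g i) * x ^ i) atTop
      (nhds (1 + (1 - x) * ∑ i ∈ Finset.range L, g i * x ^ i)) := by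
  have hpow : Tendsto (fun n : ℕ => 1 - x ^ n + (1 - x) * ∑ i ∈ Finset.range L, g i * x ^ i)
      atTop (nhds (1 - 0 + (1 - x) * ∑ i ∈ Finset.range L, g i * x ^ i)) :=
    (tendsto_const_nhds.sub (tendsto_pow_atTop_nhds_zero_of_norm_lt_one hx)).add_const _
  rw [sub_zero] at hpow
  refine hpow.congr' ?_
  filter_upwards [eventually_ge_atTop L] with n hn
  exact (one_sub_mul_sum_one_add_mul_pow x hg hn).symm

theorem stmt5_general (q ℏ a : ℂ) (hℏ : ‖ℏ‖ < 1) (hℏ0 : ℏ ≠ 0)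
    (L : ℕ) (lam : ℕ → ℕ)
    (hpad : ∀ i, L ≤ i → lam i = 0) :
    Tendsto
      (fun n : ℕ => ℏ ^ ((n : ℤ) - 1) * (1 - ℏ) *
        ∑ i ∈ Finset.range n, a * q ^ lam i * ℏ ^ ((i : ℤ) + 1 - n))
      atTop
      (nhds (a * (1 + (1 - ℏ) *
        ∑ i ∈ Finset.range L, (q ^ lam i - 1) * ℏ ^ i))) := by
  have hg : ∀ i, L ≤ i → q ^ lam i - 1 = 0 := fun i hi => by simp [hpad i hi]
  refine ((tendsto_one_sub_mul_sum_one_add_mul_pow hℏ hg).const_mul a).congr fun n => ?_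
  rw [mul_right_comm, zpow_mul_sum_zpow_sub hℏ0, Finset.mul_sum, Finset.mul_sum, Finset.sum_mul]
  refine Finset.sum_congr rfl fun i _ => ?_
  ring

/-- Stable large-n limit of the rescaled tRS eigenvalue: for |ℏ| < 1 and
aᵢ = a·q^{λᵢ}ℏ^{i-n} with λ a partition padded by zeros beyond its length L,
lim_{n→∞} ℏ^{n-1}(1-ℏ)·∑ᵢ aᵢ = a(1 + (1-ℏ)∑_{i≤L}(q^{λᵢ}-1)ℏ^{i-1}). -/
theorem stmt5 (q ℏ a : ℂ) (hℏ : ‖ℏ‖ < 1) (hℏ0 : ℏ ≠ 0)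
    (L : ℕ) (lam : ℕ → ℕ)
    (hmono : ∀ i j : ℕ, i ≤ j → lam j ≤ lam i)
    (hpad : ∀ i, L ≤ i → lam i = 0) :
    Tendsto
      (fun n : ℕ => ℏ ^ ((n : ℤ) - 1) * (1 - ℏ) *
        ∑ i ∈ Finset.range n, a * q ^ lam i * ℏ ^ ((i : ℤ) + 1 - n))
      atTop
      (nhds (a * (1 + (1 - ℏ) *
        ∑ i ∈ Finset.range L, (q ^ lam i - 1) * ℏ ^ i))) :=
  stmt5_general q ℏ a hℏ hℏ0 L lam hpad
end
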